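/- Let R be a commutative ring, A an abelian category, and G : Mod(R) → A an additive exact covariant functor such that G(T) is a zero object for every GV-torsion R-module T. Then the following are equivalent: (1) G(A) is nonzero for every nonzero w-module A; (2) G(B) is nonzero for every nonzero GV-torsion-free R-module B; (3) G(R/I) is nonzero for every proper w-ideal I of R; (4) G(R/m) is nonzero for every m ∈ w-Max(R). -/

import Mathlib

universe u v

section WDefs

variable (R : Type u) [CommRing R]

/-- The canonical `R`-linear map `R → Hom_R(J, R)`, `r ↦ (j ↦ r * j)`. -/
def gvCanonicalMap (J : Ideal R) : R →ₗ[R] (J →ₗ[R] R) where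
  toFun r := r • (J.subtype)
  map_add' x y := add_smul x y _
  map_smul' r x := by simp [mul_smul]

/-- A finitely generated ideal `J` of `R` is a GV-ideal (Glaz–Vasconcelos ideal)
if the canonical map `R → Hom_R(J, R)` is an isomorphism. -/
def IsGVIdeal (J : Ideal R) : Prop :=
  J.FG ∧ Function.Bijective (gvCanonicalMap R J)

/-- An ideal `I` of `R` is a w-ideal if whenever `J x ⊆ I` for some GV-ideal `J`,
then `x ∈ I`. -/
def IsWIdeal (I : Ideal R) : Prop :=
  ∀ x : R, (∃ J : Ideal R, IsGVIdeal R J ∧ ∀ j ∈ J, j * x ∈ I) → x ∈ I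

/-- `m` is a maximal w-ideal: maximal among the proper w-ideals of `R`. -/
def IsMaxWIdeal (m : Ideal R) : Prop :=
  IsWIdeal R m ∧ m ≠ ⊤ ∧ ∀ I : Ideal R, IsWIdeal R I → I ≠ ⊤ → m ≤ I → I = m

variable {M : Type v} [AddCommGroup M] [Module R M]

/-- `x` is a GV-torsion element if it is killed by some GV-ideal. -/
def IsGVTorsionElem (x : M) : Prop :=
  ∃ J : Ideal R, IsGVIdeal R J ∧ ∀ j ∈ J, j • x = 0

variable (M)

/-- `M` is GV-torsion-free if it has no nonzero GV-torsion element. -/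
def IsGVTorsionFree : Prop := ∀ x : M, IsGVTorsionElem R x → x = 0

/-- `M` is GV-torsion if all its elements are GV-torsion. -/
def IsGVTorsion : Prop := ∀ x : M, IsGVTorsionElem R x

/-- `M` is a w-module: GV-torsion-free and every map from a GV-ideal to `M`
extends to `R`. -/
def IsWModule : Prop :=
  IsGVTorsionFree R M ∧
    ∀ J : Ideal R, IsGVIdeal R J → ∀ f : J →ₗ[R] M,
      ∃ g : R →ₗ[R] M, ∀ x : J, g (x : R) = f x

end WDefs

open CategoryTheory CategoryTheory.Limits

/-!
(1) ⇒ (2): a GV-torsion-free module `B` embeds into its w-envelope `B_w = colim_J Hom_R(J, B)`,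
the colimit over GV-ideals `J` ordered by reverse inclusion; `B_w` is a w-module and `B_w / B` is
GV-torsion, so exactness of `G` turns `G(B) = 0` into `G(B_w) = 0`.

(4) ⇒ (2): the annihilator `I` of a nonzero `x ∈ B` is a proper w-ideal with `R/I ↪ B`, and `I`
lies in a maximal w-ideal `m` because GV-ideals are finitely generated, so that w-ideals are closed
under directed unions; then `R/I ↠ R/m`.
-/

section IsGVIdeal

variable {R : Type u} [CommRing R] {J K : Ideal R}

theorem gvCanonicalMap_apply (J : Ideal R) (r : R) (x : J) : gvCanonicalMap R J r x = r * x :=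
  rfl

theorem isGVIdeal_top : IsGVIdeal R ⊤ := by
  refine ⟨⟨{1}, by simp⟩, fun a b hab => ?_, fun f => ⟨f ⟨1, Submodule.mem_top⟩, ?_⟩⟩
  · simpa [gvCanonicalMap_apply] using LinearMap.congr_fun hab ⟨1, Submodule.mem_top⟩
  · ext x
    show f _ * x = f x
    rw [mul_comm, ← smul_eq_mul, ← map_smul]
    congr 1
    ext
    simp

theorem IsGVIdeal.eq_zero_of_forall_mul_eq_zero (hJ : IsGVIdeal R J) {r : R}
    (h : ∀ j ∈ J, j * r = 0) : r = 0 :=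
  (injective_iff_map_eq_zero _).1 hJ.2.1 r <| LinearMap.ext fun j => by
    simpa [gvCanonicalMap_apply, mul_comm] using h j j.2

theorem IsGVIdeal.mul (hJ : IsGVIdeal R J) (hK : IsGVIdeal R K) : IsGVIdeal R (J * K) := by
  refine ⟨hJ.1.mul hK.1, (injective_iff_map_eq_zero _).2 fun r hr => ?_, fun f => ?_⟩
  · refine hK.eq_zero_of_forall_mul_eq_zero fun k hk =>
      hJ.eq_zero_of_forall_mul_eq_zero fun j hj => ?_
    simpa [gvCanonicalMap_apply, mul_assoc, mul_comm, mul_left_comm] using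
      LinearMap.congr_fun hr ⟨j * k, Ideal.mul_mem_mul hj hk⟩
  -- `f (j k) = r_k j`, where `k ↦ r_k` is linear, hence `r_k = s k` for some `s`.
  let eJ := LinearEquiv.ofBijective _ hJ.2
  let eK := LinearEquiv.ofBijective _ hK.2
  let r : K →ₗ[R] R :=
    eJ.symm.toLinearMap ∘ₗ (TensorProduct.curry (f ∘ₗ Submodule.mulMap' J K)).flip
  refine ⟨eK.symm r, (LinearMap.cancel_right (Submodule.mulMap'_surjective J K)).1 <|
    TensorProduct.ext' fun j k => ?_⟩
  have hr : eK.symm r * k = r k := LinearMap.congr_fun (eK.apply_symm_apply r) k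
  have hf : r k * j = f (Submodule.mulMap' J K (j ⊗ₜ k)) :=
    LinearMap.congr_fun (eJ.apply_symm_apply _) j
  simp only [LinearMap.comp_apply, gvCanonicalMap_apply, Submodule.val_mulMap'_tmul, ← hf, ← hr]
  ring

end IsGVIdeal

section Torsion

variable {R : Type u} [CommRing R] {M : Type v} [AddCommGroup M] [Module R M]

theorem IsGVTorsion.exists_isGVIdeal_smul_eq_zero (hM : IsGVTorsion R M) {S : Submodule R M}
    (hS : S.FG) : ∃ J, IsGVIdeal R J ∧ ∀ j ∈ J, ∀ x ∈ S, j • x = 0 := by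
  induction S, hS using Submodule.fg_induction with
  | singleton x =>
    obtain ⟨J, hJ, hJx⟩ := hM x
    refine ⟨J, hJ, fun j hj y hy => ?_⟩
    obtain ⟨r, rfl⟩ := Submodule.mem_span_singleton.1 hy
    rw [smul_comm, hJx j hj, smul_zero]
  | sup S₁ S₂ _ _ ih₁ ih₂ =>
    obtain ⟨J₁, hJ₁, h₁⟩ := ih₁
    obtain ⟨J₂, hJ₂, h₂⟩ := ih₂
    refine ⟨J₁ * J₂, hJ₁.mul hJ₂, fun j hj x hx => ?_⟩
    obtain ⟨y, hy, z, hz, rfl⟩ := Submodule.mem_sup.1 hx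
    rw [smul_add, h₁ j (Ideal.mul_le_left hj) y hy, h₂ j (Ideal.mul_le_right hj) z hz, add_zero]

theorem IsWIdeal.isGVTorsionFree_quotient {I : Ideal R} (hI : IsWIdeal R I) :
    IsGVTorsionFree R (R ⧸ I) := by
  rintro x ⟨J, hJ, hJx⟩
  obtain ⟨r, rfl⟩ := Ideal.Quotient.mk_surjective x
  refine Ideal.Quotient.eq_zero_iff_mem.2 (hI r ⟨J, hJ, fun j hj => ?_⟩)
  rw [← Ideal.Quotient.eq_zero_iff_mem, map_mul]
  exact hJx j hj

theorem isWIdeal_ker_toSpanSingleton (hM : IsGVTorsionFree R M) (x : M) :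
    IsWIdeal R (LinearMap.ker (LinearMap.toSpanSingleton R M x)) := by
  rintro r ⟨J, hJ, hJr⟩
  refine hM (r • x) ⟨J, hJ, fun j hj => ?_⟩
  simpa [smul_smul] using hJr j hj

end Torsion

section MaxWIdeal

variable {R : Type u} [CommRing R]

theorem isWIdeal_sSup {c : Set (Ideal R)} (hne : c.Nonempty) (hdir : DirectedOn (· ≤ ·) c)
    (hc : ∀ I ∈ c, IsWIdeal R I) : IsWIdeal R (sSup c) := by
  rintro r ⟨J, hJ, hJr⟩
  obtain ⟨I, hIc, hI⟩ := (CompleteLattice.isCompactElement_iff_le_of_directed_sSup_le _ _).1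
    ((Submodule.fg_iff_compact _).1 (Submodule.FG.map (LinearMap.mulRight R r) hJ.1)) c hne hdir
    (Submodule.map_le_iff_le_comap.2 hJr)
  exact le_sSup hIc <| hc I hIc r ⟨J, hJ, fun j hj => hI (Submodule.mem_map_of_mem hj)⟩

theorem IsWIdeal.exists_le_isMaxWIdeal {I : Ideal R} (hI : IsWIdeal R I) (hI' : I ≠ ⊤) :
    ∃ m, I ≤ m ∧ IsMaxWIdeal R m := by
  have hchain : ∀ c ⊆ {J : Ideal R | IsWIdeal R J ∧ J ≠ ⊤}, IsChain (· ≤ ·) c → ∀ J ∈ c,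
      ∃ ub ∈ {J : Ideal R | IsWIdeal R J ∧ J ≠ ⊤}, ∀ K ∈ c, K ≤ ub := by
    intro c hc hchain J hJ
    refine ⟨sSup c, ⟨isWIdeal_sSup ⟨J, hJ⟩ hchain.directedOn fun K hK => (hc hK).1, ?_⟩,
      fun K hK => le_sSup hK⟩
    intro htop
    obtain ⟨K, hK, h1⟩ := (Submodule.mem_sSup_of_directed ⟨J, hJ⟩ hchain.directedOn).1
      (htop ▸ Submodule.mem_top : (1 : R) ∈ sSup c)
    exact (hc hK).2 ((Ideal.eq_top_iff_one K).2 h1)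
  obtain ⟨m, hIm, ⟨hmw, hmtop⟩, hmax⟩ := zorn_le_nonempty₀ _ hchain I ⟨hI, hI'⟩
  exact ⟨m, hIm, hmw, hmtop, fun J hJw hJtop hmJ => (hmax ⟨hJw, hJtop⟩ hmJ).antisymm hmJ⟩

end MaxWIdeal

section Envelope

variable (R : Type u) [CommRing R]

def GVIdeal : Type u := {J : Ideal R // IsGVIdeal R J}

namespace GVIdeal

instance : Preorder (GVIdeal R) := Preorder.lift fun J => OrderDual.toDual J.1

instance : OrderBot (GVIdeal R) where
  bot := ⟨⊤, isGVIdeal_top⟩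
  bot_le _ := le_top (α := Ideal R)

instance : IsDirectedOrder (GVIdeal R) :=
  ⟨fun J K => ⟨⟨J.1 * K.1, J.2.mul K.2⟩, Ideal.mul_le_left, Ideal.mul_le_right⟩⟩

noncomputable instance : DecidableEq (GVIdeal R) := Classical.decEq _

end GVIdeal

variable (M : Type v) [AddCommGroup M] [Module R M]

def gvRestrict (J K : GVIdeal R) (h : J ≤ K) : (J.1 →ₗ[R] M) →ₗ[R] (K.1 →ₗ[R] M) :=
  LinearMap.lcomp R M (Submodule.inclusion h)

instance : DirectedSystem (fun J : GVIdeal R => J.1 →ₗ[R] M) (gvRestrict R M · · ·) :=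
  ⟨fun _ _ => rfl, fun _ _ _ _ _ _ => rfl⟩

def WEnvelope : Type (max u v) :=
  Module.DirectLimit (fun J : GVIdeal R => J.1 →ₗ[R] M) (gvRestrict R M)

namespace WEnvelope

noncomputable instance : AddCommGroup (WEnvelope R M) :=
  inferInstanceAs (AddCommGroup (Module.DirectLimit _ _))

noncomputable instance : Module R (WEnvelope R M) :=
  inferInstanceAs (Module R (Module.DirectLimit _ _))

noncomputable def of (J : GVIdeal R) : (J.1 →ₗ[R] M) →ₗ[R] WEnvelope R M :=
  Module.DirectLimit.of R (GVIdeal R) _ (gvRestrict R M) J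

/-- `m ↦ (x ↦ x • m) : Hom_R(R, M)`, at the stage `J = R`. -/
noncomputable def embed : M →ₗ[R] WEnvelope R M :=
  of R M ⊥ ∘ₗ (LinearMap.lsmul R M).flip.compl₂ (⊤ : Ideal R).subtype

variable {R M}

theorem of_comp_inclusion {J K : GVIdeal R} (h : J ≤ K) (f : J.1 →ₗ[R] M) :
    of R M K (f ∘ₗ Submodule.inclusion h) = of R M J f :=
  Module.DirectLimit.of_f

theorem exists_of (z : WEnvelope R M) : ∃ J f, of R M J f = z :=
  Module.DirectLimit.exists_of z

theorem smul_of (J : GVIdeal R) (f : J.1 →ₗ[R] M) (j : J.1) :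
    (j : R) • of R M J f = embed R M (f j) := by
  rw [← map_smul, embed, LinearMap.comp_apply,
    ← of_comp_inclusion (bot_le : ⊥ ≤ J)]
  congr 1
  ext x
  show (j : R) • f x = (x : R) • f j
  rw [← map_smul, ← map_smul]
  exact congrArg f (Subtype.ext (mul_comm _ _))

variable (hM : IsGVTorsionFree R M)
include hM

theorem of_injective (J : GVIdeal R) : Function.Injective (of R M J) := by
  refine (injective_iff_map_eq_zero _).2 fun f hf => ?_
  obtain ⟨K, hJK, hK⟩ := Module.DirectLimit.of.zero_exact hf
  ext x
  refine hM _ ⟨K.1, K.2, fun k hk => ?_⟩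
  exact (map_smul f k x).symm.trans (LinearMap.congr_fun hK ⟨k * x, K.1.mul_mem_right _ hk⟩)

theorem embed_injective : Function.Injective (embed R M) :=
  (of_injective hM _).comp fun a b h => by simpa using LinearMap.congr_fun h ⟨1, trivial⟩

theorem isGVTorsionFree : IsGVTorsionFree R (WEnvelope R M) := by
  rintro z ⟨K, hK, hKz⟩
  obtain ⟨J, f, rfl⟩ := exists_of z
  suffices f = 0 by rw [this, map_zero]
  ext x
  refine hM _ ⟨K, hK, fun k hk => ?_⟩
  have : k • f = 0 := of_injective hM J (by rw [map_smul, hKz k hk, map_zero])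
  simpa using LinearMap.congr_fun this x

omit hM in
theorem isGVTorsion_quotient_range_embed :
    IsGVTorsion R (WEnvelope R M ⧸ LinearMap.range (embed R M)) := by
  intro z
  obtain ⟨w, rfl⟩ := Submodule.Quotient.mk_surjective _ z
  obtain ⟨J, f, rfl⟩ := exists_of w
  refine ⟨J.1, J.2, fun j hj => ?_⟩
  rw [← Submodule.Quotient.mk_smul, Submodule.Quotient.mk_eq_zero]
  exact ⟨f ⟨j, hj⟩, (smul_of J f ⟨j, hj⟩).symm⟩

/-- A map `g : K → M_w` takes `JK` into `M` for a suitable GV-ideal `J`; that restriction, as an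
element of the colimit, is the value at `1` of the extension. -/
theorem exists_extension {K : Ideal R} (hK : IsGVIdeal R K) (g : K →ₗ[R] WEnvelope R M) :
    ∃ g' : R →ₗ[R] WEnvelope R M, ∀ x : K, g' x = g x := by
  set q := (LinearMap.range (embed R M)).mkQ
  obtain ⟨J, hJ, hJg⟩ := isGVTorsion_quotient_range_embed.exists_isGVIdeal_smul_eq_zero
    (((Submodule.fg_top K).2 hK.1).map (q ∘ₗ g))
  let JK : GVIdeal R := ⟨J * K, hJ.mul hK⟩
  let incl : JK.1 →ₗ[R] K := Submodule.inclusion Ideal.mul_le_right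
  have hrange : ∀ x : JK.1, g (incl x) ∈ LinearMap.range (embed R M) := by
    rintro ⟨x, hx⟩
    rw [← Submodule.Quotient.mk_eq_zero]
    induction hx using Submodule.mul_induction_on' with
    | mem_mul_mem j hj k hk =>
      have : incl ⟨j * k, Ideal.mul_mem_mul hj hk⟩ = j • ⟨k, hk⟩ := rfl
      rw [this, map_smul, Submodule.Quotient.mk_smul]
      exact hJg j hj _ ⟨⟨k, hk⟩, trivial, rfl⟩
    | add x hx y hy ihx ihy =>
      have : incl ⟨x + y, add_mem hx hy⟩ = incl ⟨x, hx⟩ + incl ⟨y, hy⟩ := rfl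
      rw [this, map_add, Submodule.Quotient.mk_add, ihx, ihy, add_zero]
  let F : JK.1 →ₗ[R] M := (LinearEquiv.ofInjective _ (embed_injective hM)).symm.toLinearMap ∘ₗ
    (g ∘ₗ incl).codRestrict _ hrange
  have hF : ∀ x, embed R M (F x) = g (incl x) := fun x =>
    congrArg Subtype.val ((LinearEquiv.ofInjective _ (embed_injective hM)).apply_symm_apply _)
  refine ⟨LinearMap.toSpanSingleton R _ (of R M JK F), fun k => ?_⟩
  rw [LinearMap.toSpanSingleton_apply, ← sub_eq_zero]
  refine isGVTorsionFree hM _ ⟨JK.1, JK.2, fun x hx => ?_⟩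
  rw [smul_sub, smul_comm, smul_of JK F ⟨x, hx⟩, hF, ← map_smul, ← map_smul, ← map_smul,
    sub_eq_zero]
  exact congrArg g (Subtype.ext (mul_comm (k : R) x))

theorem isWModule : IsWModule R (WEnvelope R M) :=
  ⟨isGVTorsionFree hM, fun _ hK g => exists_extension hM hK g⟩

theorem nontrivial [Nontrivial M] : Nontrivial (WEnvelope R M) :=
  (embed_injective hM).nontrivial

end WEnvelope

end Envelope

section Functor

variable {R : Type u} [CommRing R] {A : Type v} [Category.{w} A] [Abelian A]
  (G : ModuleCat.{u} R ⥤ A)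

theorem isZero_obj_of_injective [PreservesFiniteLimits G] {X Y : ModuleCat.{u} R} (f : X ⟶ Y)
    (hf : Function.Injective f) (hY : IsZero (G.obj Y)) : IsZero (G.obj X) :=
  have : Mono f := (ModuleCat.mono_iff_injective f).2 hf
  IsZero.of_mono (G.map f) hY

theorem isZero_obj_of_surjective [PreservesFiniteColimits G] {X Y : ModuleCat.{u} R} (f : X ⟶ Y)
    (hf : Function.Surjective f) (hX : IsZero (G.obj X)) : IsZero (G.obj Y) :=
  have : Epi f := (ModuleCat.epi_iff_surjective f).2 hf
  IsZero.of_epi (G.map f) hX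

theorem isZero_obj_of_isZero_quotient_range [PreservesFiniteLimits G] [PreservesFiniteColimits G]
    {X Y : ModuleCat.{u} R} (f : X ⟶ Y) (hX : IsZero (G.obj X))
    (hQ : IsZero (G.obj (ModuleCat.of R (Y ⧸ LinearMap.range f.hom)))) : IsZero (G.obj Y) := by
  let S := ShortComplex.mk f (ModuleCat.ofHom (LinearMap.range f.hom).mkQ) <| by
    ext x
    exact (Submodule.Quotient.mk_eq_zero _).2 ⟨x, rfl⟩
  have hS : S.Exact := (ShortComplex.moduleCat_exact_iff S).2 fun y hy =>
    (Submodule.Quotient.mk_eq_zero _).1 hy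
  exact (hS.map G).isZero_of_both_zeros (hX.eq_of_src _ _) (hQ.eq_of_tgt _ _)

theorem exists_isMaxWIdeal_isZero_obj_quotient [PreservesFiniteLimits G]
    [PreservesFiniteColimits G] {B : ModuleCat.{u} R} (hB : IsGVTorsionFree R B) [Nontrivial B]
    (hGB : IsZero (G.obj B)) : ∃ m, IsMaxWIdeal R m ∧ IsZero (G.obj (.of R (R ⧸ m))) := by
  obtain ⟨x, hx⟩ := exists_ne (0 : B)
  let I := LinearMap.ker (LinearMap.toSpanSingleton R B x)
  have hI : I ≠ ⊤ := fun h => hx <| by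
    simpa using LinearMap.mem_ker.1 (h ▸ Submodule.mem_top : (1 : R) ∈ I)
  obtain ⟨m, hIm, hm⟩ := (isWIdeal_ker_toSpanSingleton hB x).exists_le_isMaxWIdeal hI
  have hGI : IsZero (G.obj (.of R (R ⧸ I))) :=
    isZero_obj_of_injective G (ModuleCat.ofHom (I.liftQ _ le_rfl))
      (LinearMap.ker_eq_bot.1 (Submodule.ker_liftQ_eq_bot _ _ _ le_rfl)) hGB
  exact ⟨m, hm, isZero_obj_of_surjective G (ModuleCat.ofHom (Submodule.factor hIm))
    (Submodule.factor_surjective hIm) hGI⟩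

end Functor

theorem wFaithfullyExact_tfae_general {R : Type u} [CommRing R] {A : Type v} [Category.{w} A]
    [Abelian A] (G : ModuleCat.{u} R ⥤ A)
    [PreservesFiniteLimits G] [PreservesFiniteColimits G]
    (hGV : ∀ T : ModuleCat.{u} R, IsGVTorsion R T → IsZero (G.obj T)) :
    List.TFAE [
      ∀ N : ModuleCat.{u} R, IsWModule R N → Nontrivial N → ¬ IsZero (G.obj N),
      ∀ B : ModuleCat.{u} R, IsGVTorsionFree R B → Nontrivial B → ¬ IsZero (G.obj B),
      ∀ I : Ideal R, IsWIdeal R I → I ≠ ⊤ → ¬ IsZero (G.obj (ModuleCat.of R (R ⧸ I))),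
      ∀ m : Ideal R, IsMaxWIdeal R m → ¬ IsZero (G.obj (ModuleCat.of R (R ⧸ m))) ] := by
  tfae_have 1 → 2 := fun h1 B hB _ hGB =>
    h1 (.of R (WEnvelope R B)) (WEnvelope.isWModule hB) (WEnvelope.nontrivial hB) <|
      isZero_obj_of_isZero_quotient_range G (ModuleCat.ofHom (WEnvelope.embed R B)) hGB
        (hGV _ WEnvelope.isGVTorsion_quotient_range_embed)
  tfae_have 2 → 1 := fun h2 N hN => h2 N hN.1
  tfae_have 2 → 3 := fun h2 I hI hI' =>
    h2 _ hI.isGVTorsionFree_quotient (Ideal.Quotient.nontrivial_iff.2 hI')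
  tfae_have 3 → 4 := fun h3 m hm => h3 m hm.1 hm.2.1
  tfae_have 4 → 2 := fun h4 B hB _ hGB =>
    let ⟨m, hm, hGm⟩ := exists_isMaxWIdeal_isZero_obj_quotient G hB hGB
    h4 m hm hGm
  tfae_finish

/-- w-version of Ishikawa's Theorem 1.1: for an additive exact covariant
functor `G : Mod(R) → 𝒜` annihilating GV-torsion modules, TFAE:
(1) `G(A) ≠ 0` for every nonzero w-module `A`;
(2) `G(B) ≠ 0` for every nonzero GV-torsion-free module `B`;
(3) `G(R/I) ≠ 0` for every proper w-ideal `I`;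
(4) `G(R/m) ≠ 0` for every maximal w-ideal `m`. -/
theorem wFaithfullyExact_tfae {R : Type u} [CommRing R] {A : Type v} [Category.{w} A]
    [Abelian A] (G : ModuleCat.{u} R ⥤ A) [G.Additive]
    [PreservesFiniteLimits G] [PreservesFiniteColimits G]
    (hGV : ∀ T : ModuleCat.{u} R, IsGVTorsion R T → IsZero (G.obj T)) :
    List.TFAE [
      ∀ N : ModuleCat.{u} R, IsWModule R N → Nontrivial N → ¬ IsZero (G.obj N),
      ∀ B : ModuleCat.{u} R, IsGVTorsionFree R B → Nontrivial B → ¬ IsZero (G.obj B),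
      ∀ I : Ideal R, IsWIdeal R I → I ≠ ⊤ → ¬ IsZero (G.obj (ModuleCat.of R (R ⧸ I))),
      ∀ m : Ideal R, IsMaxWIdeal R m → ¬ IsZero (G.obj (ModuleCat.of R (R ⧸ m))) ] :=
  wFaithfullyExact_tfae_general G hGV
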